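/- Let d ≥ 1 and let E : M_d(ℂ) → M_d(ℂ) be a trace-preserving linear map. Then E is positive (i.e., maps positive semidefinite matrices to positive semidefinite matrices) if and only if for every Hermitian matrix Δ ∈ M_d(ℂ) one has ‖E(Δ)‖₁ ≤ ‖Δ‖₁. -/

import Mathlib

open Matrix Kronecker
open scoped ComplexOrder

/-- The positive semidefinite square root of a positive semidefinite matrix
(the definition `Matrix.PosSemidef.sqrt` of the older Mathlib, since removed). -/
noncomputable def Matrix.PosSemidef.sqrt {n : Type*} [Fintype n] [DecidableEq n]
    {A : Matrix n n ℂ} (hA : A.PosSemidef) : Matrix n n ℂ :=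
  hA.1.eigenvectorUnitary.1 * diagonal ((↑) ∘ (Real.sqrt ∘ hA.1.eigenvalues)) *
  (star hA.1.eigenvectorUnitary : Matrix n n ℂ)

/-- The trace norm of a complex matrix: the trace of the positive semidefinite
square root of `Aᴴ * A`. -/
noncomputable def traceNorm {n : Type*} [Fintype n] [DecidableEq n]
    (A : Matrix n n ℂ) : ℝ :=
  ((Matrix.posSemidef_conjTranspose_mul_self A).sqrt.trace).re

/-- A state: a positive semidefinite matrix of trace one. -/
def IsState {n : Type*} [Fintype n] [DecidableEq n] (ρ : Matrix n n ℂ) : Prop :=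
  ρ.PosSemidef ∧ ρ.trace = 1

/-- A trace-preserving linear map on matrices. -/
def TracePreserving {d : ℕ} (Φ : Matrix (Fin d) (Fin d) ℂ →ₗ[ℂ] Matrix (Fin d) (Fin d) ℂ) : Prop :=
  ∀ A, (Φ A).trace = A.trace

/-- A Hermiticity-preserving linear map on matrices. -/
def HermPreserving {d : ℕ} (Φ : Matrix (Fin d) (Fin d) ℂ →ₗ[ℂ] Matrix (Fin d) (Fin d) ℂ) : Prop :=
  ∀ A, Φ Aᴴ = (Φ A)ᴴ

/-- The ampliation `I_n ⊗ Φ` of a linear map `Φ` on `d × d` matrices, acting blockwise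
on `n × n` block matrices with `d × d` blocks. -/
def ampliation {n d : ℕ} (Φ : Matrix (Fin d) (Fin d) ℂ →ₗ[ℂ] Matrix (Fin d) (Fin d) ℂ)
    (A : Matrix (Fin n × Fin d) (Fin n × Fin d) ℂ) :
    Matrix (Fin n × Fin d) (Fin n × Fin d) ℂ :=
  Matrix.of fun p q => Φ (Matrix.of fun i j => A (p.1, i) (q.1, j)) p.2 q.2

/-- A positive map: maps positive semidefinite matrices to positive semidefinite matrices. -/
def PositiveMap {d : ℕ} (Φ : Matrix (Fin d) (Fin d) ℂ →ₗ[ℂ] Matrix (Fin d) (Fin d) ℂ) : Prop :=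
  ∀ A, A.PosSemidef → (Φ A).PosSemidef

/-- A completely positive map: every ampliation `I_n ⊗ Φ` is a positive map. -/
def CompletelyPositive {d : ℕ}
    (Φ : Matrix (Fin d) (Fin d) ℂ →ₗ[ℂ] Matrix (Fin d) (Fin d) ℂ) : Prop :=
  ∀ n : ℕ, 1 ≤ n → ∀ A : Matrix (Fin n × Fin d) (Fin n × Fin d) ℂ,
    A.PosSemidef → (ampliation Φ A).PosSemidef

/-- A separable state on `ℂ^m ⊗ ℂ^d`: a finite convex combination of product states. -/
def SeparableState {m d : ℕ} (ρ : Matrix (Fin m × Fin d) (Fin m × Fin d) ℂ) : Prop :=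
  ∃ (k : ℕ) (w : Fin k → ℝ) (σ : Fin k → Matrix (Fin m) (Fin m) ℂ)
    (τ : Fin k → Matrix (Fin d) (Fin d) ℂ),
    (∀ i, 0 ≤ w i) ∧ (∑ i, w i) = 1 ∧ (∀ i, IsState (σ i)) ∧ (∀ i, IsState (τ i)) ∧
    ρ = ∑ i, (w i : ℂ) • (σ i ⊗ₖ τ i)

/-!
Write `‖Y‖₁ = Re tr |Y|` with `|Y| = √(YᴴY)`. For Hermitian `Δ` the Jordan decomposition
`Δ = Δ⁺ - Δ⁻` gives `‖Δ‖₁ = tr Δ⁺ + tr Δ⁻`, while `‖P - N‖₁ ≤ tr P + tr N` for all `P, N ≥ 0`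
(compare diagonal entries in an eigenbasis of `P - N`); so a positive trace-preserving `E`
contracts `Δ`. Conversely, for `A ≥ 0` contractivity gives `‖E A‖₁ ≤ tr A = tr (E A)`, and
`Re tr Y ≤ ‖Y‖₁` with equality only for `Y ≥ 0`: conjugating `Y` into an eigenbasis of `YᴴY`,
each diagonal entry `Z i i` has real part at most the norm `√λᵢ` of its column, and equality for
every `i` forces `Z` to be a nonnegative diagonal matrix.
-/

open scoped MatrixOrder

namespace Complex

variable {n : Type*} [Fintype n]

theorem re_le_sqrt_sum_normSq (v : n → ℂ) (i : n) :
    (v i).re ≤ √(∑ k, normSq (v k)) :=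
  calc (v i).re ≤ √(normSq (v i)) := re_le_norm (v i)
    _ ≤ √(∑ k, normSq (v k)) :=
      Real.sqrt_le_sqrt (Finset.single_le_sum (fun k _ ↦ normSq_nonneg (v k)) (Finset.mem_univ i))

theorem eq_single_of_sqrt_sum_normSq_le_re [DecidableEq n] {v : n → ℂ} {i : n}
    (h : √(∑ k, normSq (v k)) ≤ (v i).re) : v = Pi.single i ((v i).re : ℂ) := by
  have hsq : (v i).re ^ 2 = ∑ k, normSq (v k) := by
    rw [← Real.sq_sqrt (Finset.sum_nonneg fun k _ ↦ normSq_nonneg (v k)),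
      le_antisymm (re_le_sqrt_sum_normSq v i) h]
  have hle : ∀ s : Finset n, ∑ k ∈ s, normSq (v k) ≤ (v i).re ^ 2 := fun s ↦
    hsq ▸ Finset.sum_le_sum_of_subset_of_nonneg s.subset_univ fun k _ _ ↦ normSq_nonneg (v k)
  have him : (v i).im = 0 := by
    have := hle {i}
    rw [Finset.sum_singleton, normSq_apply] at this
    nlinarith
  funext k
  by_cases hki : k = i
  · subst hki
    exact ext (by simp) (by simp [him])
  · have := hle {i, k}
    rw [Finset.sum_pair (Ne.symm hki), normSq_apply (v i), him] at this
    rw [Pi.single_eq_of_ne hki, ← normSq_eq_zero]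
    nlinarith [normSq_nonneg (v k)]

end Complex

namespace Matrix

variable {n : Type*} [Fintype n]

theorem conjTranspose_mul_self_apply_self (A : Matrix n n ℂ) (i : n) :
    (Aᴴ * A) i i = (∑ k, Complex.normSq (A k i) : ℝ) := by
  simp [mul_apply, Complex.normSq_eq_conj_mul_self]

variable [DecidableEq n]

theorem trace_conjStarAlgAut {R : Type*} [CommRing R] [StarRing R] (u : unitaryGroup n R)
    (A : Matrix n n R) : (Unitary.conjStarAlgAut R _ u A).trace = A.trace := by
  rw [Unitary.conjStarAlgAut_apply, trace_mul_cycle, Unitary.coe_star_mul_self, one_mul]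

theorem IsHermitian.trace_cfc {𝕜 : Type*} [RCLike 𝕜] {A : Matrix n n 𝕜} (hA : A.IsHermitian)
    (f : ℝ → ℝ) : (cfc f A).trace = ∑ i, (f (hA.eigenvalues i) : 𝕜) := by
  rw [hA.cfc_eq, IsHermitian.cfc, trace_conjStarAlgAut, trace_diagonal]
  rfl

theorem PosSemidef.sqrt_eq_cfcSqrt {A : Matrix n n ℂ} (hA : A.PosSemidef) :
    hA.sqrt = CFC.sqrt A := by
  rw [CFC.sqrt_eq_real_sqrt A hA.nonneg, cfcₙ_eq_cfc, hA.1.cfc_eq, IsHermitian.cfc,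
    Unitary.conjStarAlgAut_apply]
  rfl

theorem eq_diagonal_re_of_sqrt_sum_normSq_le_re {Z : Matrix n n ℂ}
    (h : ∀ i, √(∑ k, Complex.normSq (Z k i)) ≤ (Z i i).re) :
    Z = diagonal fun i ↦ ((Z i i).re : ℂ) := by
  ext k i
  rw [congr_fun (Complex.eq_single_of_sqrt_sum_normSq_le_re (h i)) k, diagonal_apply,
    Pi.single_apply]
  split_ifs with hki
  · rw [hki]
  · rfl

end Matrix

section TraceNorm

open Matrix

variable {n : Type*} [Fintype n] [DecidableEq n]

theorem traceNorm_eq_re_trace_abs (A : Matrix n n ℂ) : traceNorm A = (CFC.abs A).trace.re := by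
  rw [traceNorm, PosSemidef.sqrt_eq_cfcSqrt]
  rfl

theorem traceNorm_of_posSemidef {A : Matrix n n ℂ} (hA : A.PosSemidef) :
    traceNorm A = A.trace.re := by
  rw [traceNorm_eq_re_trace_abs, CFC.abs_of_nonneg A hA.nonneg]

theorem Matrix.IsHermitian.traceNorm_eq_re_trace_posPart_add_negPart {A : Matrix n n ℂ}
    (hA : A.IsHermitian) : traceNorm A = (A⁺).trace.re + (A⁻).trace.re := by
  rw [traceNorm_eq_re_trace_abs, ← CFC.posPart_add_negPart A hA, trace_add, Complex.add_re]

theorem Matrix.IsHermitian.traceNorm_eq_sum_abs_eigenvalues {A : Matrix n n ℂ}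
    (hA : A.IsHermitian) : traceNorm A = ∑ i, |hA.eigenvalues i| := by
  rw [traceNorm_eq_re_trace_abs, CFC.abs_eq_cfc_norm A hA, hA.trace_cfc, Complex.re_sum]
  simp

theorem traceNorm_sub_le {A B : Matrix n n ℂ} (hA : A.PosSemidef) (hB : B.PosSemidef) :
    traceNorm (A - B) ≤ A.trace.re + B.trace.re := by
  have hAB : (A - B).IsHermitian := hA.1.sub hB.1
  set conj := Unitary.conjStarAlgAut ℂ (Matrix n n ℂ) (star hAB.eigenvectorUnitary)
  have hdiag (i : n) : (hAB.eigenvalues i : ℂ) = conj A i i - conj B i i := by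
    have := congr_fun₂ hAB.conjStarAlgAut_star_eigenvectorUnitary i i
    rw [map_sub, Matrix.sub_apply, diagonal_apply_eq] at this
    exact this.symm
  have hre (P : Matrix n n ℂ) (hP : P.PosSemidef) (i : n) : 0 ≤ (conj P i i).re :=
    (Complex.nonneg_iff.mp (nonneg_iff_posSemidef.mp (map_nonneg conj hP.nonneg)).diag_nonneg).1
  rw [hAB.traceNorm_eq_sum_abs_eigenvalues, ← trace_conjStarAlgAut (star hAB.eigenvectorUnitary) A,
    ← trace_conjStarAlgAut (star hAB.eigenvectorUnitary) B,
    trace, trace, Complex.re_sum, Complex.re_sum, ← Finset.sum_add_distrib]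
  simp only [diag_apply]
  refine Finset.sum_le_sum fun i _ ↦ abs_le.mpr ?_
  have := congr_arg Complex.re (hdiag i)
  simp only [Complex.ofReal_re, Complex.sub_re] at this
  constructor <;> linarith [hre A hA i, hre B hB i]

theorem traceNorm_eq_sum_sqrt_eigenvalues (Y : Matrix n n ℂ) :
    traceNorm Y = ∑ i, √((posSemidef_conjTranspose_mul_self Y).1.eigenvalues i) := by
  rw [traceNorm, PosSemidef.sqrt, trace_mul_cycle, Unitary.coe_star_mul_self,
    one_mul, trace_diagonal, Complex.re_sum]
  simp

theorem posSemidef_of_traceNorm_le_re_trace {Y : Matrix n n ℂ} (h : traceNorm Y ≤ Y.trace.re) :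
    Y.PosSemidef := by
  set hH := (posSemidef_conjTranspose_mul_self Y).1
  set lam := hH.eigenvalues
  set conj := Unitary.conjStarAlgAut ℂ (Matrix n n ℂ) (star hH.eigenvectorUnitary)
  set Z := conj Y
  have hcol (i : n) : ∑ k, Complex.normSq (Z k i) = lam i := by
    have hZZ : Zᴴ * Z = diagonal (RCLike.ofReal ∘ lam) := by
      rw [← star_eq_conjTranspose, ← map_star conj, ← map_mul, star_eq_conjTranspose]
      exact hH.conjStarAlgAut_star_eigenvectorUnitary
    have := congr_fun₂ hZZ i i
    rw [conjTranspose_mul_self_apply_self, diagonal_apply_eq] at this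
    exact Complex.ofReal_injective this
  have hle (i : n) : (Z i i).re ≤ √(lam i) :=
    hcol i ▸ Complex.re_le_sqrt_sum_normSq (fun k ↦ Z k i) i
  have hsum : ∑ i, √(lam i) ≤ ∑ i, (Z i i).re := by
    rwa [traceNorm_eq_sum_sqrt_eigenvalues, ← trace_conjStarAlgAut (star hH.eigenvectorUnitary) Y,
      trace, Complex.re_sum] at h
  have hge (i : n) : √(lam i) ≤ (Z i i).re :=
    ((Finset.sum_eq_sum_iff_of_le fun i _ ↦ hle i).mp
      (le_antisymm (Finset.sum_le_sum fun i _ ↦ hle i) hsum) i (Finset.mem_univ i)).ge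
  have hZ := eq_diagonal_re_of_sqrt_sum_normSq_le_re fun i ↦ (hcol i).symm ▸ hge i
  have hY : Y = conj.symm Z := (conj.symm_apply_apply Y).symm
  rw [hY, hZ, ← nonneg_iff_posSemidef]
  refine map_nonneg conj.symm (PosSemidef.diagonal fun i ↦ ?_).nonneg
  exact Complex.zero_le_real.mpr ((Real.sqrt_nonneg _).trans (hge i))

end TraceNorm

theorem positive_iff_trace_norm_contraction_on_hermitian_general (d : ℕ)
    (E : Matrix (Fin d) (Fin d) ℂ →ₗ[ℂ] Matrix (Fin d) (Fin d) ℂ)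
    (hTP : TracePreserving E) :
    PositiveMap E ↔
      ∀ Δ : Matrix (Fin d) (Fin d) ℂ, Δ.IsHermitian → traceNorm (E Δ) ≤ traceNorm Δ := by
  constructor
  · intro hpos Δ hΔ
    have hPos : (E Δ⁺).PosSemidef := hpos _ (nonneg_iff_posSemidef.mp (CFC.posPart_nonneg Δ))
    have hNeg : (E Δ⁻).PosSemidef := hpos _ (nonneg_iff_posSemidef.mp (CFC.negPart_nonneg Δ))
    calc traceNorm (E Δ) = traceNorm (E Δ⁺ - E Δ⁻) := by
          rw [← map_sub, CFC.posPart_sub_negPart Δ hΔ]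
      _ ≤ (E Δ⁺).trace.re + (E Δ⁻).trace.re := traceNorm_sub_le hPos hNeg
      _ = traceNorm Δ := by rw [hTP, hTP, hΔ.traceNorm_eq_re_trace_posPart_add_negPart]
  · intro hcontr A hA
    refine posSemidef_of_traceNorm_le_re_trace ?_
    calc traceNorm (E A) ≤ traceNorm A := hcontr A hA.1
      _ = (E A).trace.re := by rw [traceNorm_of_posSemidef hA, hTP]

/-- Theorem (Kossakowski; Ruskai): a trace-preserving linear map on `M_d(ℂ)` is positive
iff it contracts the trace norm on Hermitian matrices. -/
theorem positive_iff_trace_norm_contraction_on_hermitian (d : ℕ) (hd : 1 ≤ d)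
    (E : Matrix (Fin d) (Fin d) ℂ →ₗ[ℂ] Matrix (Fin d) (Fin d) ℂ)
    (hTP : TracePreserving E) :
    PositiveMap E ↔
      ∀ Δ : Matrix (Fin d) (Fin d) ℂ, Δ.IsHermitian → traceNorm (E Δ) ≤ traceNorm Δ :=
  positive_iff_trace_norm_contraction_on_hermitian_general d E hTP
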